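/- Let λ > 0 and let Ñ be a Poisson random variable with parameter λ. Suppose ε ∈ (0,1) is small enough that n* := -λ·ln ε satisfies n* ≥ 2λ and λ·(ln(-ln ε) - 1) ≥ 1 and e^{-λ}/(√(2π n*)·(1 + 1/ln ε)) ≤ 1/2. Then Pr{Ñ ≥ n*} ≤ ε/2. -/

import Mathlib

/-!
Past `N = ⌈n*⌉` the Poisson weights decay at least geometrically with ratio `λ / N ≤ λ / n*`,
so the tail is at most `e^{-λ} (λ^N / N!) / (1 - λ / n*)`. Stirling's lower bound
`N! ≥ √(2πN) (N/e)^N` turns `λ^N / N!` into `(λe/n*)^{n*} / √(2π n*)`, and with `L = -ln ε`,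
`n* = λL` we get `(λe/n*)^{n*} = exp (-λL (ln L - 1)) ≤ e^{-L} = ε`.
-/

open Real
open scoped Nat

lemma factorial_mul_pow_le_factorial_add (N k : ℕ) : N ! * N ^ k ≤ (N + k)! :=
  (Nat.mul_le_mul_left _ (Nat.pow_le_pow_left N.le_succ k)).trans Nat.factorial_mul_pow_le_factorial

lemma tsum_ite_le_eq_tsum_nat_add_ceil {M : Type*} [AddCommMonoid M] [TopologicalSpace M]
    (a : ℕ → M) (t : ℝ) :
    ∑' n : ℕ, (if t ≤ n then a n else 0) = ∑' k : ℕ, a (k + ⌈t⌉₊) := by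
  rw [← (add_left_injective ⌈t⌉₊).tsum_eq]
  · refine tsum_congr fun k ↦ if_pos ?_
    exact (Nat.ceil_le.1 le_add_self).trans (by push_cast; rfl)
  · intro n hn
    have htn : t ≤ n := by by_contra h; exact hn (if_neg h)
    exact ⟨n - ⌈t⌉₊, Nat.sub_add_cancel (Nat.ceil_le.2 htn)⟩

section
variable {x : ℝ}

lemma pow_add_div_factorial_add_le (hx : 0 ≤ x) {N : ℕ} (hN : 0 < N) (k : ℕ) :
    x ^ (k + N) / (k + N)! ≤ x ^ N / N ! * (x / N) ^ k := by
  have hfac : (N ! : ℝ) * N ^ k ≤ (N + k)! := by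
    exact_mod_cast factorial_mul_pow_le_factorial_add N k
  rw [div_pow, div_mul_div_comm, ← pow_add, add_comm k N]
  gcongr

lemma tsum_pow_add_div_factorial_add_le (hx : 0 ≤ x) {N : ℕ} (hxN : x < N) :
    ∑' k : ℕ, x ^ (k + N) / (k + N)! ≤ x ^ N / N ! * (1 - x / N)⁻¹ := by
  have hN : 0 < N := by exact_mod_cast hx.trans_lt hxN
  have hr : x / N < 1 := (div_lt_one (by positivity)).2 hxN
  rw [← tsum_geometric_of_lt_one (by positivity) hr, ← tsum_mul_left]
  exact Summable.tsum_le_tsum (pow_add_div_factorial_add_le hx hN)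
    ((summable_nat_add_iff N).2 (Real.summable_pow_div_factorial x))
    ((summable_geometric_of_lt_one (by positivity) hr).mul_left _)

lemma pow_div_factorial_le_of_stirling (hx : 0 ≤ x) {n : ℕ} (hn : n ≠ 0) :
    x ^ n / n ! ≤ (x * exp 1 / n) ^ n / √(2 * π * n) := by
  calc x ^ n / n ! ≤ x ^ n / (√(2 * π * n) * (n / exp 1) ^ n) := by
        gcongr
        exact Stirling.le_factorial_stirling n
    _ = (x * exp 1 / n) ^ n / √(2 * π * n) := by
        simp only [div_pow, mul_pow]
        field_simp

lemma pow_div_factorial_ceil_le {t : ℝ} (hx : 0 < x) (hxt : x * exp 1 ≤ t) :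
    x ^ ⌈t⌉₊ / ⌈t⌉₊ ! ≤ (x * exp 1 / t) ^ t / √(2 * π * t) := by
  have ht : 0 < t := (by positivity : 0 < x * exp 1).trans_le hxt
  have htN : t ≤ ⌈t⌉₊ := Nat.le_ceil t
  have hb : 0 < x * exp 1 / t := by positivity
  calc x ^ ⌈t⌉₊ / ⌈t⌉₊ ! ≤ (x * exp 1 / ⌈t⌉₊) ^ ⌈t⌉₊ / √(2 * π * ⌈t⌉₊) :=
        pow_div_factorial_le_of_stirling hx.le (Nat.ceil_pos.2 ht).ne'
    _ ≤ (x * exp 1 / t) ^ (⌈t⌉₊ : ℝ) / √(2 * π * t) := by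
        rw [rpow_natCast]
        gcongr
    _ ≤ (x * exp 1 / t) ^ t / √(2 * π * t) := by
        gcongr ?_ / _
        exact rpow_le_rpow_of_exponent_ge hb ((div_le_one ht).2 hxt) htN

theorem tsum_poisson_tail_le {t : ℝ} (hx : 0 < x) (hxt : x * exp 1 ≤ t) :
    ∑' n : ℕ, (if t ≤ n then exp (-x) * x ^ n / n ! else 0)
      ≤ exp (-x) / (√(2 * π * t) * (1 - x / t)) * (x * exp 1 / t) ^ t := by
  have hxt' : x < t := (lt_mul_of_one_lt_right hx (one_lt_exp_iff.2 one_pos)).trans_le hxt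
  have hxN : x < ⌈t⌉₊ := hxt'.trans_le (Nat.le_ceil t)
  have hmul : ∀ n : ℕ, (if t ≤ n then exp (-x) * x ^ n / n ! else 0)
      = exp (-x) * if t ≤ n then x ^ n / n ! else 0 := by
    intro n; split_ifs <;> ring
  simp_rw [hmul]
  rw [tsum_mul_left, tsum_ite_le_eq_tsum_nat_add_ceil]
  calc exp (-x) * ∑' k : ℕ, x ^ (k + ⌈t⌉₊) / (k + ⌈t⌉₊)!
      ≤ exp (-x) * (x ^ ⌈t⌉₊ / ⌈t⌉₊ ! * (1 - x / ⌈t⌉₊)⁻¹) := by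
        gcongr
        exact tsum_pow_add_div_factorial_add_le hx.le hxN
    _ ≤ exp (-x) * ((x * exp 1 / t) ^ t / √(2 * π * t) * (1 - x / t)⁻¹) := by
        have ht : 0 < t := hx.trans hxt'
        have hN : 0 < 1 - x / ⌈t⌉₊ := sub_pos.2 ((div_lt_one (hx.trans hxN)).2 hxN)
        have hinv : (1 - x / ⌈t⌉₊)⁻¹ ≤ (1 - x / t)⁻¹ :=
          inv_anti₀ (sub_pos.2 ((div_lt_one ht).2 hxt'))
            (sub_le_sub_left (div_le_div_of_nonneg_left hx.le ht (Nat.le_ceil t)) 1)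
        gcongr exp (-x) * ?_
        exact mul_le_mul (pow_div_factorial_ceil_le hx hxt) hinv (inv_pos.2 hN).le
          (by positivity)
    _ = exp (-x) / (√(2 * π * t) * (1 - x / t)) * (x * exp 1 / t) ^ t := by
        field_simp

end

lemma exp_one_div_rpow_le {lam L : ℝ} (hL : 0 < L)
    (h : 1 ≤ lam * (log L - 1)) : (exp 1 / L) ^ (lam * L) ≤ exp (-L) := by
  rw [rpow_def_of_pos (by positivity), log_div (exp_ne_zero 1) hL.ne', log_exp, exp_le_exp]
  nlinarith

theorem poisson_tail_general (lam ε : ℝ) (hlam : 0 < lam) (hε0 : 0 < ε) (hε1 : ε < 1)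
    (h2 : 1 ≤ lam * (Real.log (-Real.log ε) - 1))
    (h3 : Real.exp (-lam) / (Real.sqrt (2 * Real.pi * (-lam * Real.log ε)) * (1 + 1 / Real.log ε))
            ≤ 1 / 2) :
    (∑' n : ℕ, if -lam * Real.log ε ≤ (n : ℝ) then
        Real.exp (-lam) * lam ^ n / (Nat.factorial n : ℝ) else 0) ≤ ε / 2 := by
  set L := -log ε with hL_def
  have hL : 0 < L := neg_pos.2 (log_neg hε0 hε1)
  have hLe : exp 1 < L := (lt_log_iff_exp_lt hL).1 (by nlinarith)
  have ht : -lam * log ε = lam * L := by ring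
  have hbase : lam * exp 1 / (lam * L) = exp 1 / L := by field_simp
  have hratio : 1 + 1 / log ε = 1 - lam / (lam * L) := by
    rw [show log ε = -L by rw [hL_def, neg_neg]]
    field_simp
    ring
  rw [ht, hratio] at h3
  rw [ht]
  calc _ ≤ exp (-lam) / (√(2 * π * (lam * L)) * (1 - lam / (lam * L)))
        * (lam * exp 1 / (lam * L)) ^ (lam * L) :=
        tsum_poisson_tail_le hlam (by gcongr)
    _ ≤ 1 / 2 * ε := by
        rw [hbase]
        gcongr
        exact (exp_one_div_rpow_le hL h2).trans_eq (by rw [hL_def, neg_neg, exp_log hε0])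
    _ = ε / 2 := by ring

theorem poisson_tail (lam ε : ℝ) (hlam : 0 < lam) (hε0 : 0 < ε) (hε1 : ε < 1)
    (h1 : (2 : ℝ) * lam ≤ -lam * Real.log ε)
    (h2 : 1 ≤ lam * (Real.log (-Real.log ε) - 1))
    (h3 : Real.exp (-lam) / (Real.sqrt (2 * Real.pi * (-lam * Real.log ε)) * (1 + 1 / Real.log ε))
            ≤ 1 / 2) :
    (∑' n : ℕ, if -lam * Real.log ε ≤ (n : ℝ) then
        Real.exp (-lam) * lam ^ n / (Nat.factorial n : ℝ) else 0) ≤ ε / 2 :=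
  poisson_tail_general lam ε hlam hε0 hε1 h2 h3
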